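/- Let a, b : ℝ → ℝ be C¹ with a(t) < b(t), let w : ℝ → ℝ be C¹, let e : ℝ → ℝ be C² and set γ(c) := e(c) − c·e'(c). Let h, c : ℝ × ℝ → ℝ be sufficiently smooth with h(a(t), t) = w(a(t)) and h(b(t), t) = w(b(t)) for all t. Set Q := √(1 + h_x²), v_n := h_t/Q, H := −h_{xx}/Q³, and let D ≥ 0. Suppose that for every t and every x ∈ [a(t), b(t)] the surfactant equation c_t − v_n·∂_x(c·h_x/Q) = (D/Q)·∂_x(c_x/Q) holds, and that the Robin boundary conditions D·c_x + c·(1 + h_x·w_x)·b'(t) = 0 at x = b(t) and D·c_x + c·(1 + h_x·w_x)·a'(t) = 0 at x = a(t) hold for all t. Then for every t: d/dt ∫_{a(t)}^{b(t)} e(c)·√(1 + h_x²) dx = ∫_{a(t)}^{b(t)} γ(c)·h_t·H dx − D·∫_{a(t)}^{b(t)} e''(c)·c_x²/√(1 + h_x²) dx + cos θ_b·γ(c(b(t), t))·b'(t)·(1 + h_x·w_x)|_{x=b(t)} − cos θ_a·γ(c(a(t), t))·a'(t)·(1 + h_x·w_x)|_{x=a(t)}, where cos θ_a = 1/√(1 +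 h_x²)|_{x=a(t)} and cos θ_b = 1/√(1 + h_x²)|_{x=b(t)}. -/

import Mathlib

open intervalIntegral

/-- partial derivative in the space variable `x` -/
noncomputable def px1 (f : ℝ → ℝ → ℝ) (x t : ℝ) : ℝ := deriv (fun x' => f x' t) x

/-- partial derivative in the time variable `t` -/
noncomputable def pt1 (f : ℝ → ℝ → ℝ) (x t : ℝ) : ℝ := deriv (fun t' => f x t') t

/-- second partial derivative in `x` -/
noncomputable def pxx1 (f : ℝ → ℝ → ℝ) (x t : ℝ) : ℝ := deriv (fun x' => px1 f x' t) x

/-- the arclength element `Q = √(1 + h_x²)` -/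
noncomputable def Qarc (h : ℝ → ℝ → ℝ) (x t : ℝ) : ℝ := Real.sqrt (1 + px1 h x t ^ 2)

/-- the curvature `H = −h_xx/(1+h_x²)^{3/2}` -/
noncomputable def curv (h : ℝ → ℝ → ℝ) (x t : ℝ) : ℝ := -pxx1 h x t / Qarc h x t ^ 3

open Metric MeasureTheory Asymptotics Filter Topology

section PD

variable {f : ℝ → ℝ → ℝ}

lemma hda_x (hf : ContDiff ℝ (⊤ : ℕ∞) (fun p : ℝ × ℝ => f p.1 p.2)) (x t : ℝ) :
    HasDerivAt (fun x' => f x' t) (fderiv ℝ (fun p : ℝ × ℝ => f p.1 p.2) (x, t) (1, 0)) x :=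
  HasFDerivAt.comp_hasDerivAt (f := fun x' : ℝ => ((x', t) : ℝ × ℝ)) x
    ((hf.differentiable (by simp) (x, t)).hasFDerivAt)
    ((hasDerivAt_id x).prodMk (hasDerivAt_const x t))

lemma hda_t (hf : ContDiff ℝ (⊤ : ℕ∞) (fun p : ℝ × ℝ => f p.1 p.2)) (x t : ℝ) :
    HasDerivAt (fun t' => f x t') (fderiv ℝ (fun p : ℝ × ℝ => f p.1 p.2) (x, t) (0, 1)) t :=
  ((hf.differentiable (by simp) (x, t)).hasFDerivAt).comp_hasDerivAt t
    ((hasDerivAt_const t x).prodMk (hasDerivAt_id t))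

lemma px1_eq (hf : ContDiff ℝ (⊤ : ℕ∞) (fun p : ℝ × ℝ => f p.1 p.2)) (x t : ℝ) :
    px1 f x t = fderiv ℝ (fun p : ℝ × ℝ => f p.1 p.2) (x, t) (1, 0) := (hda_x hf x t).deriv

lemma pt1_eq (hf : ContDiff ℝ (⊤ : ℕ∞) (fun p : ℝ × ℝ => f p.1 p.2)) (x t : ℝ) :
    pt1 f x t = fderiv ℝ (fun p : ℝ × ℝ => f p.1 p.2) (x, t) (0, 1) := (hda_t hf x t).deriv

lemma hasDerivAt_px1 (hf : ContDiff ℝ (⊤ : ℕ∞) (fun p : ℝ × ℝ => f p.1 p.2)) (x t : ℝ) :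
    HasDerivAt (fun x' => f x' t) (px1 f x t) x := (hda_x hf x t).differentiableAt.hasDerivAt

lemma hasDerivAt_pt1 (hf : ContDiff ℝ (⊤ : ℕ∞) (fun p : ℝ × ℝ => f p.1 p.2)) (x t : ℝ) :
    HasDerivAt (fun t' => f x t') (pt1 f x t) t := (hda_t hf x t).differentiableAt.hasDerivAt

lemma contDiff_px1 (hf : ContDiff ℝ (⊤ : ℕ∞) (fun p : ℝ × ℝ => f p.1 p.2)) :
    ContDiff ℝ (⊤ : ℕ∞) (fun p : ℝ × ℝ => px1 f p.1 p.2) := by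
  have : (fun p : ℝ × ℝ => px1 f p.1 p.2)
      = fun p : ℝ × ℝ => fderiv ℝ (fun p : ℝ × ℝ => f p.1 p.2) p (1, 0) := by
    funext p; exact px1_eq hf p.1 p.2
  rw [this]
  exact (hf.fderiv_right ((by simp))).clm_apply contDiff_const

lemma contDiff_pt1 (hf : ContDiff ℝ (⊤ : ℕ∞) (fun p : ℝ × ℝ => f p.1 p.2)) :
    ContDiff ℝ (⊤ : ℕ∞) (fun p : ℝ × ℝ => pt1 f p.1 p.2) := by
  have : (fun p : ℝ × ℝ => pt1 f p.1 p.2)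
      = fun p : ℝ × ℝ => fderiv ℝ (fun p : ℝ × ℝ => f p.1 p.2) p (0, 1) := by
    funext p; exact pt1_eq hf p.1 p.2
  rw [this]
  exact (hf.fderiv_right ((by simp))).clm_apply contDiff_const

lemma clairaut (hf : ContDiff ℝ (⊤ : ℕ∞) (fun p : ℝ × ℝ => f p.1 p.2)) (x t : ℝ) :
    pt1 (px1 f) x t = px1 (pt1 f) x t := by
  set F : ℝ × ℝ → ℝ := fun p => f p.1 p.2 with hF
  set F' : ℝ × ℝ → (ℝ × ℝ) →L[ℝ] ℝ := fderiv ℝ F with hF'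
  have hdF' : Differentiable ℝ F' := (hf.fderiv_right (m := 1) ((by exact WithTop.coe_le_coe.2 (le_top : (((1 + 1 : ℕ) : ℕ∞)) ≤ ⊤)))).differentiable one_ne_zero
  set F'' : (ℝ × ℝ) →L[ℝ] (ℝ × ℝ) →L[ℝ] ℝ := fderiv ℝ F' (x, t) with hF''
  have hsym : ∀ v w : ℝ × ℝ, F'' v w = F'' w v :=
    second_derivative_symmetric (fun y => (hf.differentiable (by simp) y).hasFDerivAt)
      (hdF' (x, t)).hasFDerivAt
  have happ : ∀ v : ℝ × ℝ, HasFDerivAt (fun p => F' p v)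
      ((F''.flip v : (ℝ × ℝ) →L[ℝ] ℝ)) (x, t) := by
    intro v
    exact (ContinuousLinearMap.apply ℝ ℝ v).hasFDerivAt.comp (x, t) (hdF' (x, t)).hasFDerivAt
  have h1 : pt1 (px1 f) x t = F'' (0, 1) (1, 0) := by
    have e1 : (fun t' => px1 f x t') = fun t' => F' (x, t') (1, 0) := by
      funext t'; exact px1_eq hf x t'
    have : HasDerivAt (fun t' => F' (x, t') (1, 0)) (F''.flip (1, 0) (0, 1)) t :=
      (happ (1, 0)).comp_hasDerivAt t ((hasDerivAt_const t x).prodMk (hasDerivAt_id t))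
    rw [pt1, e1, this.deriv]; rfl
  have h2 : px1 (pt1 f) x t = F'' (1, 0) (0, 1) := by
    have e1 : (fun x' => pt1 f x' t) = fun x' => F' (x', t) (0, 1) := by
      funext x'; exact pt1_eq hf x' t
    have : HasDerivAt (fun x' => F' (x', t) (0, 1)) (F''.flip (0, 1) (1, 0)) x :=
      HasFDerivAt.comp_hasDerivAt (f := fun x' : ℝ => ((x', t) : ℝ × ℝ)) x (happ (0, 1))
        ((hasDerivAt_id x).prodMk (hasDerivAt_const x t))
    rw [px1, e1, this.deriv]; rfl
  rw [h1, h2, hsym]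

end PD

lemma abs_sub_le_of_uIcc {x b1 b2 : ℝ} (hx : x ∈ Set.uIcc b1 b2) : |x - b1| ≤ |b2 - b1| := by
  rcases Set.mem_uIcc.1 hx with ⟨h1, h2⟩ | ⟨h1, h2⟩ <;> rw [abs_le] <;> constructor <;>
    cases abs_cases (b2 - b1) <;> linarith [abs_nonneg (b2 - b1)]

/-- shrinking-interval part of the Leibniz rule -/
lemma aux_shrink (f : ℝ → ℝ → ℝ) (hf : Continuous (fun p : ℝ × ℝ => f p.1 p.2))
    (b : ℝ → ℝ) (b' t : ℝ) (hb : HasDerivAt b b' t) :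
    HasDerivAt (fun s => ∫ x in b t..b s, f x s) (f (b t) t * b') t := by
  rw [hasDerivAt_iff_isLittleO]
  have hfs : ∀ s : ℝ, Continuous fun x => f x s := fun s =>
    hf.comp (continuous_id.prodMk continuous_const)
  have key : ∀ s : ℝ, (∫ x in b t..b s, f x s) - (∫ x in b t..b t, f x t)
      - (s - t) • (f (b t) t * b')
      = (∫ x in b t..b s, (f x s - f (b t) t))
        + f (b t) t * (b s - b t - (s - t) * b') := by
    intro s
    rw [intervalIntegral.integral_same, intervalIntegral.integral_sub
      ((hfs s).intervalIntegrable _ _) (intervalIntegrable_const),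
      intervalIntegral.integral_const]
    simp [smul_eq_mul]; ring
  simp only [key]
  have h2 : (fun s => f (b t) t * (b s - b t - (s - t) * b')) =o[𝓝 t] fun s => s - t := by
    have := hb.isLittleO
    simpa [smul_eq_mul] using this.const_mul_left (f (b t) t)
  refine IsLittleO.add ?_ h2
  rw [isLittleO_iff]
  intro c hc
  -- continuity of f at (b t, t)
  have hε : (0:ℝ) < c / (|b'| + 1) := by positivity
  obtain ⟨δ, hδ, hδ'⟩ := Metric.continuousAt_iff.1 hf.continuousAt _ hε
  -- eventually |b s - b t| ≤ (|b'|+1) |s - t|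
  have hBig : ∀ᶠ s in 𝓝 t, |b s - b t| ≤ (|b'| + 1) * |s - t| := by
    have := (isLittleO_iff.1 hb.isLittleO) one_pos
    filter_upwards [this] with s hs
    have h1 : |b s - b t - (s - t) * b'| ≤ |s - t| := by simpa [smul_eq_mul] using hs
    have h2 : |(s - t) * b'| = |s - t| * |b'| := abs_mul _ _
    have h3 : |b s - b t| ≤ |b s - b t - (s - t) * b'| + |(s - t) * b'| := by
      simpa using abs_add_le (b s - b t - (s - t) * b') ((s - t) * b')
    nlinarith [abs_nonneg (s - t), abs_nonneg b']
  have hbc : ContinuousAt b t := hb.continuousAt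
  have hsmall : ∀ᶠ s in 𝓝 t, |b s - b t| < δ / 2 ∧ |s - t| < δ / 2 := by
    have h1 : ∀ᶠ s in 𝓝 t, |b s - b t| < δ / 2 := by
      have := hbc.tendsto
      have : ∀ᶠ s in 𝓝 t, b s ∈ ball (b t) (δ/2) := hbc.tendsto (ball_mem_nhds _ (by linarith))
      filter_upwards [this] with s hs
      rw [mem_ball, Real.dist_eq] at hs; exact hs
    have h2 : ∀ᶠ s in 𝓝 t, |s - t| < δ / 2 := by
      have : ∀ᶠ s in 𝓝 t, s ∈ ball t (δ/2) := ball_mem_nhds _ (by linarith)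
      filter_upwards [this] with s hs using by simpa [mem_ball, Real.dist_eq] using hs
    exact h1.and h2
  filter_upwards [hBig, hsmall] with s hs ⟨hs1, hs2⟩
  have hbound : ∀ x ∈ Set.uIoc (b t) (b s), ‖f x s - f (b t) t‖ ≤ c / (|b'| + 1) := by
    intro x hx
    have hx' : |x - b t| ≤ |b s - b t| := abs_sub_le_of_uIcc (Set.uIoc_subset_uIcc hx)
    have hd : dist (x, s) ((b t, t) : ℝ × ℝ) < δ := by
      rw [Prod.dist_eq]
      apply max_lt <;> rw [Real.dist_eq] <;> [linarith; linarith]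
    have := hδ' hd
    rw [Real.dist_eq] at this
    exact le_of_lt (by simpa using this)
  calc ‖∫ x in b t..b s, (f x s - f (b t) t)‖
      ≤ c / (|b'| + 1) * |b s - b t| := intervalIntegral.norm_integral_le_of_norm_le_const hbound
    _ ≤ c / (|b'| + 1) * ((|b'| + 1) * |s - t|) := by
        apply mul_le_mul_of_nonneg_left hs (le_of_lt hε)
    _ = c * |s - t| := by field_simp
    _ = c * ‖s - t‖ := by rw [Real.norm_eq_abs]

lemma leibniz (f g : ℝ → ℝ → ℝ)
    (hcont : Continuous (fun p : ℝ × ℝ => f p.1 p.2))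
    (hgcont : Continuous (fun p : ℝ × ℝ => g p.1 p.2))
    (hdrv : ∀ x s : ℝ, HasDerivAt (fun s' => f x s') (g x s) s)
    (a b : ℝ → ℝ) (a' b' t : ℝ) (ha : HasDerivAt a a' t) (hb : HasDerivAt b b' t) :
    HasDerivAt (fun s => ∫ x in a s..b s, f x s)
      ((∫ x in a t..b t, g x t) + f (b t) t * b' - f (a t) t * a') t := by
  have hfs : ∀ s : ℝ, Continuous fun x => f x s := fun s =>
    hcont.comp (continuous_id.prodMk continuous_const)
  have hint : ∀ u v s : ℝ, IntervalIntegrable (fun x => f x s) MeasureTheory.volume u v :=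
    fun u v s => (hfs s).intervalIntegrable u v
  have hsplit : (fun s => ∫ x in a s..b s, f x s)
      = fun s => (∫ x in a t..b t, f x s) + (∫ x in b t..b s, f x s)
          - (∫ x in a t..a s, f x s) := by
    funext s
    have h1 : (∫ x in a t..a s, f x s) + (∫ x in a s..b s, f x s) = ∫ x in a t..b s, f x s :=
      integral_add_adjacent_intervals (hint _ _ _) (hint _ _ _)
    have h2 : (∫ x in a t..b t, f x s) + (∫ x in b t..b s, f x s) = ∫ x in a t..b s, f x s :=
      integral_add_adjacent_intervals (hint _ _ _) (hint _ _ _)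
    linarith [h1, h2]
  rw [hsplit]
  have hI : HasDerivAt (fun s => ∫ x in a t..b t, f x s) (∫ x in a t..b t, g x t) t := by
    obtain ⟨C, hC⟩ := ((isCompact_uIcc (a := a t) (b := b t)).prod
      (isCompact_closedBall t 1)).exists_bound_of_continuousOn hgcont.continuousOn
    have key := intervalIntegral.hasDerivAt_integral_of_dominated_loc_of_deriv_le
      (𝕜 := ℝ) (μ := MeasureTheory.volume)
      (F := fun s x => f x s) (F' := fun s x => g x s) (x₀ := t) (a := a t) (b := b t)
      (bound := fun _ => C) (ball_mem_nhds t one_pos)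
      (Eventually.of_forall fun s => (hfs s).aestronglyMeasurable)
      (hint _ _ t)
      ((hgcont.comp
        (continuous_id.prodMk continuous_const)).aestronglyMeasurable)
      (Eventually.of_forall fun x hx s hs =>
        hC (x, s) (Set.mem_prod.2 ⟨Set.uIoc_subset_uIcc hx, ball_subset_closedBall hs⟩))
      intervalIntegrable_const
      (Eventually.of_forall fun x hx s hs => hdrv x s)
    exact key.2
  exact (hI.add (aux_shrink f hcont b b' t hb)).sub (aux_shrink f hcont a a' t ha)

lemma pin_deriv (h : ℝ → ℝ → ℝ) (w b : ℝ → ℝ) (t : ℝ)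
    (hh : ContDiff ℝ (⊤ : ℕ∞) (fun p : ℝ × ℝ => h p.1 p.2))
    (hbd : HasDerivAt b (deriv b t) t) (hwd : HasDerivAt w (deriv w (b t)) (b t))
    (hpin : ∀ s, h (b s) s = w (b s)) :
    pt1 h (b t) t = (deriv w (b t) - px1 h (b t) t) * deriv b t := by
  have h1 : HasDerivAt (fun s => h (b s) s)
      (px1 h (b t) t * deriv b t + pt1 h (b t) t) t := by
    have hF := ((hh.differentiable (by simp)) (b t, t)).hasFDerivAt
    have hcurve : HasDerivAt (fun s => ((b s, s) : ℝ × ℝ)) (deriv b t, 1) t :=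
      hbd.prodMk (hasDerivAt_id t)
    have hco : HasDerivAt (fun s => h (b s) s)
        (fderiv ℝ (fun p : ℝ × ℝ => h p.1 p.2) (b t, t) (deriv b t, 1)) t :=
      HasFDerivAt.comp_hasDerivAt (f := fun s => ((b s, s) : ℝ × ℝ)) t hF hcurve
    convert hco using 1
    have hv : ((deriv b t, 1) : ℝ × ℝ) = deriv b t • ((1 : ℝ), (0 : ℝ)) + ((0 : ℝ), (1 : ℝ)) := by
      simp [Prod.ext_iff]
    rw [hv, ContinuousLinearMap.map_add, ContinuousLinearMap.map_smul, px1_eq hh, pt1_eq hh]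
    simp [smul_eq_mul]
    ring
  have h2 : HasDerivAt (fun s => w (b s)) (deriv w (b t) * deriv b t) t := hwd.comp t hbd
  have heqf : (fun s => h (b s) s) = fun s => w (b s) := funext hpin
  rw [heqf] at h1
  have h3 := h1.unique h2
  linear_combination h3

lemma hasDerivAt_sqrt_one_add_sq {u : ℝ → ℝ} {u' y : ℝ} (hu : HasDerivAt u u' y) :
    HasDerivAt (fun z => Real.sqrt (1 + u z ^ 2)) (u y * u' / Real.sqrt (1 + u y ^ 2)) y := by
  have h1 : (0:ℝ) < 1 + u y ^ 2 := by positivity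
  have hs0 : (0:ℝ) < Real.sqrt (1 + u y ^ 2) := Real.sqrt_pos.2 h1
  have hs : HasDerivAt (fun z => Real.sqrt (1 + u z ^ 2))
      (1 / (2 * Real.sqrt (1 + u y ^ 2)) * (0 + ((2 : ℕ) : ℝ) * u y ^ (2 - 1) * u')) y :=
    (Real.hasDerivAt_sqrt (ne_of_gt h1)).comp y
    ((hasDerivAt_const y (1:ℝ)).add (hu.pow 2))
  convert hs using 1
  field_simp
  ring

/-- boundary algebra -/
lemma bdry_alg (D cv E E' cx hx wx v q ht : ℝ) (hq : 0 < q) (hq2 : q ^ 2 = 1 + hx ^ 2)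
    (hbc : D * cx + cv * (1 + hx * wx) * v = 0) (hht : ht = (wx - hx) * v) :
    (D * E' * cx / q + E * hx * ht / q) + (E * q) * v
      = (1 / q) * (E - cv * E') * v * (1 + hx * wx) := by
  subst hht
  have hD : D * cx = -(cv * (1 + hx * wx) * v) := by linarith
  have hq0 : q ≠ 0 := ne_of_gt hq
  field_simp
  linear_combination E' * hD + E * v * hq2

/-- rate of change (energy_c_n) of the capillary surface energy:
`d/dt ∫ e(c)√(1+h_x²) dx = ∫ γ(c)h_t H dx − D∫ e''(c)c_x²/√(1+h_x²) dx
  + cosθ_b·γ(c(b))·b'·(1+h_x w_x)|_b − cosθ_a·γ(c(a))·a'·(1+h_x w_x)|_a`. -/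
theorem capillary_energy_rate
    (a b w : ℝ → ℝ) (h c : ℝ → ℝ → ℝ) (e : ℝ → ℝ) (D : ℝ) (hD : 0 ≤ D)
    (ha : ContDiff ℝ 1 a) (hb : ContDiff ℝ 1 b) (hab : ∀ t, a t < b t)
    (hw : ContDiff ℝ 1 w) (he : ContDiff ℝ 2 e)
    (hh : ContDiff ℝ (⊤ : ℕ∞) (fun p : ℝ × ℝ => h p.1 p.2))
    (hc : ContDiff ℝ (⊤ : ℕ∞) (fun p : ℝ × ℝ => c p.1 p.2))
    (hpin : ∀ t, h (a t) t = w (a t) ∧ h (b t) t = w (b t))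
    (heq : ∀ t, ∀ x ∈ Set.Icc (a t) (b t),
      pt1 c x t
          - (pt1 h x t / Qarc h x t) *
              px1 (fun x t => c x t * px1 h x t / Qarc h x t) x t
        = (D / Qarc h x t) * px1 (fun x t => px1 c x t / Qarc h x t) x t)
    (hbcb : ∀ t, D * px1 c (b t) t
        + c (b t) t * (1 + px1 h (b t) t * deriv w (b t)) * deriv b t = 0)
    (hbca : ∀ t, D * px1 c (a t) t
        + c (a t) t * (1 + px1 h (a t) t * deriv w (a t)) * deriv a t = 0) :
    ∀ t : ℝ,
      HasDerivAt (fun s => ∫ x in a s..b s, e (c x s) * Real.sqrt (1 + px1 h x s ^ 2))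
        ((∫ x in a t..b t,
            (e (c x t) - c x t * deriv e (c x t)) * pt1 h x t * curv h x t)
          - D * (∫ x in a t..b t,
              deriv (deriv e) (c x t) * px1 c x t ^ 2 / Real.sqrt (1 + px1 h x t ^ 2))
          + (1 / Qarc h (b t) t)
              * (e (c (b t) t) - c (b t) t * deriv e (c (b t) t))
              * deriv b t * (1 + px1 h (b t) t * deriv w (b t))
          - (1 / Qarc h (a t) t)
              * (e (c (a t) t) - c (a t) t * deriv e (c (a t) t))
              * deriv a t * (1 + px1 h (a t) t * deriv w (a t))) t := by
  intro t
  -- basic facts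
  have hqpos : ∀ x s : ℝ, 0 < Qarc h x s := fun x s => Real.sqrt_pos.2 (by positivity)
  have hq2 : ∀ x s : ℝ, Qarc h x s ^ 2 = 1 + px1 h x s ^ 2 :=
    fun x s => Real.sq_sqrt (by positivity)
  have he1 : ContDiff ℝ 1 (deriv e) := by
    have h2 : ContDiff ℝ (1 + 1 : ℕ) e := by exact_mod_cast he
    exact (contDiff_succ_iff_deriv.mp (by exact_mod_cast h2)).2.2
  have heD : Differentiable ℝ e := he.differentiable two_ne_zero
  have heD' : Differentiable ℝ (deriv e) := he1.differentiable one_ne_zero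
  have heC'' : Continuous (deriv (deriv e)) := he1.continuous_deriv le_rfl
  -- joint continuity
  have Cc : Continuous (fun p : ℝ × ℝ => c p.1 p.2) := hc.continuous
  have Ccx : Continuous (fun p : ℝ × ℝ => px1 c p.1 p.2) := (contDiff_px1 hc).continuous
  have Cct : Continuous (fun p : ℝ × ℝ => pt1 c p.1 p.2) := (contDiff_pt1 hc).continuous
  have Ccxx : Continuous (fun p : ℝ × ℝ => pxx1 c p.1 p.2) :=
    (contDiff_px1 (contDiff_px1 hc)).continuous
  have Chx : Continuous (fun p : ℝ × ℝ => px1 h p.1 p.2) := (contDiff_px1 hh).continuous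
  have Cht : Continuous (fun p : ℝ × ℝ => pt1 h p.1 p.2) := (contDiff_pt1 hh).continuous
  have Chxx : Continuous (fun p : ℝ × ℝ => pxx1 h p.1 p.2) :=
    (contDiff_px1 (contDiff_px1 hh)).continuous
  have Chxt : Continuous (fun p : ℝ × ℝ => pt1 (px1 h) p.1 p.2) :=
    (contDiff_pt1 (contDiff_px1 hh)).continuous
  have Chtx : Continuous (fun p : ℝ × ℝ => px1 (pt1 h) p.1 p.2) :=
    (contDiff_px1 (contDiff_pt1 hh)).continuous
  have CQ : Continuous (fun p : ℝ × ℝ => Qarc h p.1 p.2) :=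
    Real.continuous_sqrt.comp (continuous_const.add (Chx.pow 2))
  -- restrictions to the line s = t
  have rl : ∀ {F : ℝ × ℝ → ℝ}, Continuous F → Continuous (fun y : ℝ => F (y, t)) :=
    fun hF => hF.comp (continuous_id.prodMk continuous_const)
  -- x-derivative facts at time t
  have dc : ∀ y, HasDerivAt (fun x' => c x' t) (px1 c y t) y := fun y => hasDerivAt_px1 hc y t
  have dcx : ∀ y, HasDerivAt (fun x' => px1 c x' t) (pxx1 c y t) y :=
    fun y => hasDerivAt_px1 (contDiff_px1 hc) y t
  have dhx : ∀ y, HasDerivAt (fun x' => px1 h x' t) (pxx1 h y t) y :=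
    fun y => hasDerivAt_px1 (contDiff_px1 hh) y t
  have dht : ∀ y, HasDerivAt (fun x' => pt1 h x' t) (px1 (pt1 h) y t) y :=
    fun y => hasDerivAt_px1 (contDiff_pt1 hh) y t
  have dQ : ∀ y, HasDerivAt (fun x' => Qarc h x' t)
      (px1 h y t * pxx1 h y t / Qarc h y t) y :=
    fun y => hasDerivAt_sqrt_one_add_sq (dhx y)
  have dec : ∀ y, HasDerivAt (fun x' => e (c x' t)) (deriv e (c y t) * px1 c y t) y :=
    fun y => (heD (c y t)).hasDerivAt.comp y (dc y)
  have dec' : ∀ y, HasDerivAt (fun x' => deriv e (c x' t))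
      (deriv (deriv e) (c y t) * px1 c y t) y :=
    fun y => by have := (heD' (c y t)).hasDerivAt.comp y (dc y); exact this
  -- the PDE flux terms, simplified
  have hA : ∀ y, px1 (fun x t => c x t * px1 h x t / Qarc h x t) y t
      = px1 c y t * px1 h y t / Qarc h y t + c y t * pxx1 h y t / Qarc h y t ^ 3 := by
    intro y
    have hd : HasDerivAt (fun x' => c x' t * px1 h x' t / Qarc h x' t)
        (((px1 c y t * px1 h y t + c y t * pxx1 h y t) * Qarc h y t
          - c y t * px1 h y t * (px1 h y t * pxx1 h y t / Qarc h y t)) / Qarc h y t ^ 2) y :=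
      ((dc y).mul (dhx y)).div (dQ y) (hqpos y t).ne'
    rw [px1, hd.deriv]
    have h1 := hqpos y t; have h2 := hq2 y t
    have h0 : Qarc h y t ≠ 0 := h1.ne'
    field_simp
    linear_combination (c y t * pxx1 h y t) * h2
  have hB : ∀ y, px1 (fun x t => px1 c x t / Qarc h x t) y t
      = pxx1 c y t / Qarc h y t - px1 c y t * px1 h y t * pxx1 h y t / Qarc h y t ^ 3 := by
    intro y
    have hd : HasDerivAt (fun x' => px1 c x' t / Qarc h x' t)
        ((pxx1 c y t * Qarc h y t
          - px1 c y t * (px1 h y t * pxx1 h y t / Qarc h y t)) / Qarc h y t ^ 2) y :=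
      (dcx y).div (dQ y) (hqpos y t).ne'
    rw [px1, hd.deriv]
    have h1 := hqpos y t
    have h0 : Qarc h y t ≠ 0 := h1.ne'
    field_simp
  -- boundary flux function and its derivative
  set g : ℝ → ℝ := fun y => D * deriv e (c y t) * px1 c y t / Qarc h y t
      + e (c y t) * px1 h y t * pt1 h y t / Qarc h y t with hgdef
  set gx : ℝ → ℝ := fun y =>
      D * (deriv (deriv e) (c y t) * px1 c y t ^ 2 / Qarc h y t
        + deriv e (c y t) * pxx1 c y t / Qarc h y t
        - deriv e (c y t) * px1 c y t * px1 h y t * pxx1 h y t / Qarc h y t ^ 3)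
      + deriv e (c y t) * px1 c y t * px1 h y t * pt1 h y t / Qarc h y t
      + e (c y t) * (pxx1 h y t * pt1 h y t / Qarc h y t ^ 3
        + px1 h y t * px1 (pt1 h) y t / Qarc h y t) with hgxdef
  have hg : ∀ y, HasDerivAt g (gx y) y := by
    intro y
    have p1 : HasDerivAt (fun x' => D * deriv e (c x' t) * px1 c x' t / Qarc h x' t)
        ((((0 * deriv e (c y t) + D * (deriv (deriv e) (c y t) * px1 c y t)) * px1 c y t
            + D * deriv e (c y t) * pxx1 c y t) * Qarc h y t
          - D * deriv e (c y t) * px1 c y t * (px1 h y t * pxx1 h y t / Qarc h y t))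
          / Qarc h y t ^ 2) y :=
      (((hasDerivAt_const y D).mul (dec' y)).mul (dcx y)).div (dQ y) (hqpos y t).ne'
    have p2 : HasDerivAt (fun x' => e (c x' t) * px1 h x' t * pt1 h x' t / Qarc h x' t)
        ((((deriv e (c y t) * px1 c y t * px1 h y t + e (c y t) * pxx1 h y t) * pt1 h y t
            + e (c y t) * px1 h y t * px1 (pt1 h) y t) * Qarc h y t
          - e (c y t) * px1 h y t * pt1 h y t * (px1 h y t * pxx1 h y t / Qarc h y t))
          / Qarc h y t ^ 2) y :=
      (((dec y).mul (dhx y)).mul (dht y)).div (dQ y) (hqpos y t).ne'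
    have := p1.add p2
    refine this.congr_deriv (Eq.symm ?_)
    simp only [hgxdef]
    have h1 := hqpos y t; have h2 := hq2 y t
    have h0 : Qarc h y t ≠ 0 := h1.ne'
    field_simp
    linear_combination (-(e (c y t) * pxx1 h y t * pt1 h y t)) * h2
  -- time derivative of the integrand
  have hd : ∀ x s, HasDerivAt (fun s' => e (c x s') * Real.sqrt (1 + px1 h x s' ^ 2))
      (deriv e (c x s) * pt1 c x s * Qarc h x s
        + e (c x s) * (px1 h x s * pt1 (px1 h) x s / Qarc h x s)) s := by
    intro x s
    have h1 : HasDerivAt (fun s' => e (c x s')) (deriv e (c x s) * pt1 c x s) s :=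
      (heD (c x s)).hasDerivAt.comp s (hasDerivAt_pt1 hc x s)
    have h2 : HasDerivAt (fun s' => Real.sqrt (1 + px1 h x s' ^ 2))
        (px1 h x s * pt1 (px1 h) x s / Qarc h x s) s :=
      hasDerivAt_sqrt_one_add_sq (hasDerivAt_pt1 (contDiff_px1 hh) x s)
    exact h1.mul h2
  have hφc : Continuous (fun p : ℝ × ℝ => e (c p.1 p.2) * Real.sqrt (1 + px1 h p.1 p.2 ^ 2)) :=
    (he.continuous.comp Cc).mul (Real.continuous_sqrt.comp (continuous_const.add (Chx.pow 2)))
  have hψc : Continuous (fun p : ℝ × ℝ => deriv e (c p.1 p.2) * pt1 c p.1 p.2 * Qarc h p.1 p.2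
      + e (c p.1 p.2) * (px1 h p.1 p.2 * pt1 (px1 h) p.1 p.2 / Qarc h p.1 p.2)) := by
    refine Continuous.add ?_ ?_
    · exact (((he.continuous_deriv one_le_two).comp Cc).mul Cct).mul CQ
    · exact (he.continuous.comp Cc).mul
        ((Chx.mul Chxt).div CQ fun p => (hqpos p.1 p.2).ne')
  have hbder : HasDerivAt b (deriv b t) t := ((hb.differentiable one_ne_zero) t).hasDerivAt
  have hader : HasDerivAt a (deriv a t) t := ((ha.differentiable one_ne_zero) t).hasDerivAt
  have hlb := leibniz (fun x s => e (c x s) * Real.sqrt (1 + px1 h x s ^ 2))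
    (fun x s => deriv e (c x s) * pt1 c x s * Qarc h x s
      + e (c x s) * (px1 h x s * pt1 (px1 h) x s / Qarc h x s))
    hφc hψc hd a b (deriv a t) (deriv b t) t hader hbder
  -- pinning derivatives
  have hpinb : pt1 h (b t) t = (deriv w (b t) - px1 h (b t) t) * deriv b t :=
    pin_deriv h w b t hh hbder ((hw.differentiable one_ne_zero _).hasDerivAt)
      (fun s => (hpin s).2)
  have hpina : pt1 h (a t) t = (deriv w (a t) - px1 h (a t) t) * deriv a t :=
    pin_deriv h w a t hh hader ((hw.differentiable one_ne_zero _).hasDerivAt)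
      (fun s => (hpin s).1)
  -- pointwise identity under the integral
  have hpt : ∀ x ∈ Set.Icc (a t) (b t),
      deriv e (c x t) * pt1 c x t * Qarc h x t
        + e (c x t) * (px1 h x t * pt1 (px1 h) x t / Qarc h x t)
      = (e (c x t) - c x t * deriv e (c x t)) * pt1 h x t * curv h x t
        + (-D) * (deriv (deriv e) (c x t) * px1 c x t ^ 2 / Real.sqrt (1 + px1 h x t ^ 2))
        + gx x := by
    intro x hx
    have pde := heq t x hx
    rw [hA x, hB x] at pde
    have hcl : pt1 (px1 h) x t = px1 (pt1 h) x t := clairaut hh x t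
    have h1 := hqpos x t
    have h0 : Qarc h x t ≠ 0 := h1.ne'
    have hct : pt1 c x t
        = pt1 h x t / Qarc h x t * (px1 c x t * px1 h x t / Qarc h x t
            + c x t * pxx1 h x t / Qarc h x t ^ 3)
          + D / Qarc h x t * (pxx1 c x t / Qarc h x t
            - px1 c x t * px1 h x t * pxx1 h x t / Qarc h x t ^ 3) := by
      linarith [pde]
    have hsq : Real.sqrt (1 + px1 h x t ^ 2) = Qarc h x t := rfl
    rw [hct, hcl, hsq]
    simp only [hgxdef, curv]
    field_simp
    ring
  -- computing the integral of the time derivative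
  have hicc : Set.uIcc (a t) (b t) = Set.Icc (a t) (b t) := Set.uIcc_of_le (hab t).le
  have it1 : IntervalIntegrable
      (fun x => (e (c x t) - c x t * deriv e (c x t)) * pt1 h x t * curv h x t)
      MeasureTheory.volume (a t) (b t) := by
    apply Continuous.intervalIntegrable
    have : Continuous (fun y => curv h y t) := by
      refine Continuous.div (rl Chxx).neg ((rl CQ).pow 3) fun y => ?_
      exact pow_ne_zero 3 (hqpos y t).ne'
    exact (((he.continuous.comp (rl Cc)).sub ((rl Cc).mul
      ((he.continuous_deriv one_le_two).comp (rl Cc)))).mul (rl Cht)).mul this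
  have it2 : IntervalIntegrable
      (fun x => (-D) * (deriv (deriv e) (c x t) * px1 c x t ^ 2
        / Real.sqrt (1 + px1 h x t ^ 2)))
      MeasureTheory.volume (a t) (b t) := by
    apply Continuous.intervalIntegrable
    refine continuous_const.mul (Continuous.div ((heC''.comp (rl Cc)).mul ((rl Ccx).pow 2))
      (rl CQ) fun y => (hqpos y t).ne')
  have it3 : IntervalIntegrable gx MeasureTheory.volume (a t) (b t) := by
    apply Continuous.intervalIntegrable
    simp only [hgxdef]
    have hQne : ∀ y : ℝ, Qarc h y t ≠ 0 := fun y => (hqpos y t).ne'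
    have hQ3ne : ∀ y : ℝ, Qarc h y t ^ 3 ≠ 0 := fun y => pow_ne_zero 3 (hQne y)
    refine Continuous.add (Continuous.add (continuous_const.mul ?_) ?_) ?_
    · refine Continuous.sub (Continuous.add ?_ ?_) ?_
      · exact Continuous.div ((heC''.comp (rl Cc)).mul ((rl Ccx).pow 2)) (rl CQ) hQne
      · exact Continuous.div (((he.continuous_deriv one_le_two).comp (rl Cc)).mul (rl Ccxx))
          (rl CQ) hQne
      · exact Continuous.div (((((he.continuous_deriv one_le_two).comp (rl Cc)).mul
          (rl Ccx)).mul (rl Chx)).mul (rl Chxx)) ((rl CQ).pow 3) hQ3ne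
    · exact Continuous.div (((((he.continuous_deriv one_le_two).comp (rl Cc)).mul
        (rl Ccx)).mul (rl Chx)).mul (rl Cht)) (rl CQ) hQne
    · refine (he.continuous.comp (rl Cc)).mul (Continuous.add ?_ ?_)
      · exact Continuous.div ((rl Chxx).mul (rl Cht)) ((rl CQ).pow 3) hQ3ne
      · exact Continuous.div ((rl Chx).mul (rl Chtx)) (rl CQ) hQne
  have hIψ : (∫ x in a t..b t, (deriv e (c x t) * pt1 c x t * Qarc h x t
        + e (c x t) * (px1 h x t * pt1 (px1 h) x t / Qarc h x t)))
      = (∫ x in a t..b t, (e (c x t) - c x t * deriv e (c x t)) * pt1 h x t * curv h x t)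
        + (-D) * (∫ x in a t..b t, deriv (deriv e) (c x t) * px1 c x t ^ 2
            / Real.sqrt (1 + px1 h x t ^ 2))
        + (g (b t) - g (a t)) := by
    rw [intervalIntegral.integral_congr (g := fun x =>
        (e (c x t) - c x t * deriv e (c x t)) * pt1 h x t * curv h x t
        + (-D) * (deriv (deriv e) (c x t) * px1 c x t ^ 2 / Real.sqrt (1 + px1 h x t ^ 2))
        + gx x) (by rw [hicc]; exact fun x hx => hpt x hx)]
    rw [intervalIntegral.integral_add (it1.add it2) it3,
      intervalIntegral.integral_add it1 it2,
      intervalIntegral.integral_const_mul,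
      intervalIntegral.integral_eq_sub_of_hasDerivAt
        (fun y _ => hg y) (it3)]
  -- boundary algebra
  have hbb := bdry_alg D (c (b t) t) (e (c (b t) t)) (deriv e (c (b t) t)) (px1 c (b t) t)
    (px1 h (b t) t) (deriv w (b t)) (deriv b t) (Qarc h (b t) t) (pt1 h (b t) t)
    (hqpos _ _) (hq2 _ _) (hbcb t) hpinb
  have haa := bdry_alg D (c (a t) t) (e (c (a t) t)) (deriv e (c (a t) t)) (px1 c (a t) t)
    (px1 h (a t) t) (deriv w (a t)) (deriv a t) (Qarc h (a t) t) (pt1 h (a t) t)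
    (hqpos _ _) (hq2 _ _) (hbca t) hpina
  -- finish
  convert hlb using 1
  have hsb : Real.sqrt (1 + px1 h (b t) t ^ 2) = Qarc h (b t) t := rfl
  have hsa : Real.sqrt (1 + px1 h (a t) t ^ 2) = Qarc h (a t) t := rfl
  rw [hIψ]
  simp only [hgdef, hsb, hsa]
  linarith [hbb, haa]
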